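/- Let G = (V, E, w) be a connected weighted graph with positive edge weights, let T = (V, F, w) be a spanning tree of G, with Laplacians L_G and L_T, and let M be the Moore–Penrose pseudoinverse of L_T. Then for every real t > 0, the number of eigenvalues of L_G · M (roots of its characteristic polynomial over ℂ, counted with multiplicity) whose real part is greater than t is at most st_T(G)/t, where st_T(G) is the stretch of G with respect to T. -/

import Mathlib

open Matrix

/-- The rank-one Laplacian contribution `(ψ_u - ψ_v)(ψ_u - ψ_v)ᵀ` of an edge,
as a function on unordered pairs. -/
noncomputable def edgeLap {V : Type*} [DecidableEq V] : Sym2 V → Matrix V V ℝ :=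
  Sym2.lift ⟨fun u v =>
      Matrix.vecMulVec (Pi.single u 1 - Pi.single v 1) (Pi.single u 1 - Pi.single v 1),
    by
      intro u v
      ext i j
      simp [Matrix.vecMulVec]
      ring⟩

/-- The Laplacian of a weighted graph: `L_G = Σ_{e∈E} w(e) (ψ_u - ψ_v)(ψ_u - ψ_v)ᵀ`. -/
noncomputable def lapW {V : Type*} [Fintype V] [DecidableEq V]
    (G : SimpleGraph V) [DecidableRel G.Adj] (w : Sym2 V → ℝ) : Matrix V V ℝ :=
  ∑ e ∈ G.edgeFinset, w e • edgeLap e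

/-- The sum `Σ_i 1 / w(e_i)` over the edges `e_1, …, e_k` of the unique simple path in the
tree `T` from `u` to `v`. -/
noncomputable def treePathWeight {V : Type*} (T : SimpleGraph V) (hT : T.IsTree)
    (w : Sym2 V → ℝ) (u v : V) : ℝ :=
  (((hT.existsUnique_path u v).choose.edges).map fun e => 1 / w e).sum

lemma treePathWeight_symm {V : Type*} (T : SimpleGraph V) (hT : T.IsTree)
    (w : Sym2 V → ℝ) (u v : V) :
    treePathWeight T hT w u v = treePathWeight T hT w v u := by
  have h1 := (hT.existsUnique_path u v).choose_spec
  have h2 := (hT.existsUnique_path v u).choose_spec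
  have hrev : (hT.existsUnique_path u v).choose.reverse = (hT.existsUnique_path v u).choose :=
    h2.2 _ h1.1.reverse
  unfold treePathWeight
  rw [← hrev, SimpleGraph.Walk.edges_reverse, List.map_reverse, List.sum_reverse]

/-- The stretch `st_T(e) = w(e) · Σ_i 1 / w(e_i)` of an unordered pair `e`, where
`e_1, …, e_k` are the edges of the unique simple path in `T` joining the endpoints of `e`. -/
noncomputable def stretchEdge {V : Type*} (T : SimpleGraph V) (hT : T.IsTree)
    (w : Sym2 V → ℝ) : Sym2 V → ℝ :=
  Sym2.lift ⟨fun u v => w s(u, v) * treePathWeight T hT w u v,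
    by
      intro u v
      simp only []
      rw [Sym2.eq_swap, treePathWeight_symm]⟩

/-- The stretch of `G` with respect to the spanning tree `T`:
`st_T(G) = Σ_{e∈E} st_T(e)`. -/
noncomputable def stretch {V : Type*} [Fintype V] [DecidableEq V]
    (G : SimpleGraph V) [DecidableRel G.Adj] (T : SimpleGraph V) (hT : T.IsTree)
    (w : Sym2 V → ℝ) : ℝ :=
  ∑ e ∈ G.edgeFinset, stretchEdge T hT w e

/-!
The pseudoinverse `M` of `L_T` is symmetric, and `M = M L_T M` is positive semidefinite. Writing
`M = S²` with `S` positive semidefinite, `L_G M` has the characteristic polynomial of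
`S L_G S ⪰ 0`, so all its eigenvalues are nonnegative reals. Their sum is
`tr (L_G M) = Σ_{uv ∈ E} w(uv) bᵀ M b` with `b = ψ_u - ψ_v`. In the tree, `b = L_T φ`, where `φ`
adds up, over the edges `f` of the tree path from `u` to `v`, `1 / w(f)` times the indicator of
the component of `T - f` containing `u`. Hence `bᵀ M b = φᵀ L_T M L_T φ = φᵀ b = φ(u) - φ(v)`
is the resistance of that path, and the trace is `st_T(G)`. Markov's inequality concludes.
-/

open Polynomial SimpleGraph

theorem Multiset.card_filter_lt_mul_le_sum_map {α : Type*} (s : Multiset α) (f : α → ℝ)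
    (hf : ∀ a ∈ s, 0 ≤ f a) (t : ℝ) :
    ((s.filter fun a => t < f a).card : ℝ) * t ≤ (s.map f).sum := by
  set s' := s.filter fun a => t < f a
  calc (s'.card : ℝ) * t ≤ (s'.map f).sum := by
        rw [← nsmul_eq_mul, ← Multiset.card_map f]
        refine Multiset.card_nsmul_le_sum fun x hx => ?_
        obtain ⟨a, ha, rfl⟩ := Multiset.mem_map.mp hx
        exact (Multiset.mem_filter.mp ha).2.le
    _ ≤ (s'.map f).sum + ((s.filter fun a => ¬t < f a).map f).sum :=
        le_add_of_nonneg_right <| Multiset.sum_nonneg fun x hx => by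
          obtain ⟨a, ha, rfl⟩ := Multiset.mem_map.mp hx
          exact hf a (Multiset.mem_of_mem_filter ha)
    _ = (s.map f).sum := by rw [← Multiset.sum_add, ← Multiset.map_add, Multiset.filter_add_not]

namespace Matrix

variable {n R : Type*} [Fintype n]

theorem transpose_eq_self_of_isMoorePenroseInverse [CommSemiring R] {A X : Matrix n n R}
    (hA : Aᵀ = A) (h1 : A * X * A = A) (h2 : X * A * X = X)
    (h3 : (A * X)ᵀ = A * X) (h4 : (X * A)ᵀ = X * A) : Xᵀ = X := by
  have hAX : Xᵀ * A = A * X := by rw [← h3, transpose_mul, hA]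
  have hXA : A * Xᵀ = X * A := by rw [← h4, transpose_mul, hA]
  have hAX' : A * X = A * Xᵀ :=
    calc A * X = Xᵀ * (A * X * A) := by rw [h1, hAX]
      _ = (Xᵀ * A) * (X * A) := by simp only [Matrix.mul_assoc]
      _ = (A * X * A) * Xᵀ := by rw [hAX, ← hXA]; simp only [Matrix.mul_assoc]
      _ = A * Xᵀ := by rw [h1]
  have hXA' : Xᵀ * A = X * A := by
    rw [← hA, ← transpose_mul, hAX', transpose_mul, transpose_transpose]
  calc Xᵀ = (X * A * X)ᵀ := by rw [h2]
    _ = Xᵀ * A * Xᵀ := by rw [transpose_mul, transpose_mul, hA, Matrix.mul_assoc]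
    _ = X * (A * X) := by rw [hXA', hAX', Matrix.mul_assoc]
    _ = X := by rw [← Matrix.mul_assoc, h2]

theorem dotProduct_mulVec_mulVec_of_mul_mul_eq [CommSemiring R] {L M : Matrix n n R}
    (hL : Lᵀ = L) (hM : L * M * L = L) (φ : n → R) :
    (L *ᵥ φ) ⬝ᵥ (M *ᵥ (L *ᵥ φ)) = φ ⬝ᵥ (L *ᵥ φ) :=
  calc (L *ᵥ φ) ⬝ᵥ (M *ᵥ (L *ᵥ φ)) = (φ ᵥ* L) ⬝ᵥ ((M * L) *ᵥ φ) := by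
        rw [mulVec_mulVec, ← mulVec_transpose, hL]
    _ = φ ⬝ᵥ (L *ᵥ φ) := by rw [← dotProduct_mulVec, mulVec_mulVec, ← Matrix.mul_assoc, hM]

variable [DecidableEq n]

theorem PosSemidef.re_nonneg_of_mem_roots_charpoly_map {C : Matrix n n ℝ} (hC : C.PosSemidef)
    {μ : ℂ} (hμ : μ ∈ (C.charpoly.map (algebraMap ℝ ℂ)).roots) : 0 ≤ μ.re := by
  rw [hC.isHermitian.charpoly_eq, Polynomial.map_prod] at hμ
  simp only [Polynomial.map_sub, map_X, map_C, roots_prod, roots_X_sub_C, Multiset.bind_singleton,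
    Multiset.mem_map, Finset.mem_val, Finset.mem_univ, true_and, Finset.prod_ne_zero_iff,
    X_sub_C_ne_zero, ne_eq, not_false_eq_true, implies_true] at hμ
  obtain ⟨i, rfl⟩ := hμ
  simpa using hC.eigenvalues_nonneg i

open scoped MatrixOrder in
theorem PosSemidef.exists_posSemidef_mul_self_eq {B : Matrix n n ℝ} (hB : B.PosSemidef) :
    ∃ S : Matrix n n ℝ, S.PosSemidef ∧ S * S = B :=
  ⟨CFC.sqrt B, (CFC.sqrt_nonneg B).posSemidef, CFC.sqrt_mul_sqrt_self B hB.nonneg⟩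

theorem re_nonneg_of_mem_roots_charpoly_map_mul {A B : Matrix n n ℝ} (hA : A.PosSemidef)
    (hB : B.PosSemidef) {μ : ℂ} (hμ : μ ∈ ((A * B).charpoly.map (algebraMap ℝ ℂ)).roots) :
    0 ≤ μ.re := by
  obtain ⟨S, hS, rfl⟩ := hB.exists_posSemidef_mul_self_eq
  -- `A * S * S` and `S * A * S` have the same characteristic polynomial.
  rw [← Matrix.mul_assoc, charpoly_mul_comm, ← Matrix.mul_assoc] at hμ
  have hSAS : (S * A * S).PosSemidef := by
    simpa only [hS.isHermitian.eq] using hA.conjTranspose_mul_mul_same S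
  exact hSAS.re_nonneg_of_mem_roots_charpoly_map hμ

theorem sum_re_roots_charpoly_map (A : Matrix n n ℝ) :
    ((A.charpoly.map (algebraMap ℝ ℂ)).roots.map Complex.re).sum = A.trace := by
  rw [← charpoly_map, ← Complex.coe_reAddGroupHom, ← map_multiset_sum, Complex.coe_reAddGroupHom,
    ← trace_eq_sum_roots_charpoly]
  simp [trace]

end Matrix

section Laplacian

variable {V : Type*} [DecidableEq V]

def edgeVec (u v : V) : V → ℝ := Pi.single u 1 - Pi.single v 1

theorem edgeVec_add_edgeVec (u v x : V) : edgeVec u x + edgeVec x v = edgeVec u v := by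
  simp only [edgeVec]; abel

theorem edgeLap_mk (u v : V) : edgeLap s(u, v) = vecMulVec (edgeVec u v) (edgeVec u v) := rfl

theorem edgeLap_transpose (e : Sym2 V) : (edgeLap e)ᵀ = edgeLap e := by
  induction e using Sym2.ind with
  | _ u v => rw [edgeLap_mk, transpose_vecMulVec]

variable [Fintype V]

theorem dotProduct_edgeVec (x : V → ℝ) (u v : V) : x ⬝ᵥ edgeVec u v = x u - x v := by
  rw [edgeVec, dotProduct_sub, dotProduct_single_one, dotProduct_single_one]

theorem edgeLap_mulVec (u v : V) (x : V → ℝ) :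
    edgeLap s(u, v) *ᵥ x = (x u - x v) • edgeVec u v := by
  rw [edgeLap_mk, vecMulVec_mulVec, dotProduct_comm, dotProduct_edgeVec, op_smul_eq_smul]

theorem trace_edgeLap_mul (u v : V) (M : Matrix V V ℝ) :
    (edgeLap s(u, v) * M).trace = edgeVec u v ⬝ᵥ (M *ᵥ edgeVec u v) := by
  rw [edgeLap_mk, vecMulVec_mul, trace_vecMulVec, dotProduct_comm, ← dotProduct_mulVec]

theorem edgeLap_posSemidef (e : Sym2 V) : (edgeLap e).PosSemidef := by
  induction e using Sym2.ind with
  | _ u v =>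
    simpa only [edgeLap_mk, star_trivial] using posSemidef_vecMulVec_self_star (edgeVec u v)

variable (G : SimpleGraph V) [DecidableRel G.Adj] (w : Sym2 V → ℝ)

theorem lapW_transpose : (lapW G w)ᵀ = lapW G w := by
  simp only [lapW, transpose_sum, transpose_smul, edgeLap_transpose]

theorem lapW_posSemidef (hw : ∀ e ∈ G.edgeSet, 0 ≤ w e) : (lapW G w).PosSemidef :=
  posSemidef_sum _ fun e he => (edgeLap_posSemidef e).smul (hw e (mem_edgeFinset.mp he))

theorem lapW_mulVec (x : V → ℝ) :
    lapW G w *ᵥ x = ∑ e ∈ G.edgeFinset, w e • (edgeLap e *ᵥ x) := by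
  simp only [lapW, sum_mulVec, smul_mulVec]

end Laplacian

section TreePotential

variable {V : Type*} {T : SimpleGraph V}

noncomputable def componentIndicator (T : SimpleGraph V) (e : Sym2 V) (a : V) : V → ℝ :=
  Set.indicator {x | (T.deleteEdges {e}).Reachable a x} 1

theorem componentIndicator_of_reachable {e : Sym2 V} {a x : V}
    (h : (T.deleteEdges {e}).Reachable a x) : componentIndicator T e a x = 1 :=
  Set.indicator_of_mem (s := {x | (T.deleteEdges {e}).Reachable a x}) h 1

theorem componentIndicator_of_not_reachable {e : Sym2 V} {a x : V}
    (h : ¬(T.deleteEdges {e}).Reachable a x) : componentIndicator T e a x = 0 :=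
  Set.indicator_of_notMem (s := {x | (T.deleteEdges {e}).Reachable a x}) h 1

theorem componentIndicator_eq_of_adj {e : Sym2 V} {a x y : V}
    (hxy : (T.deleteEdges {e}).Adj x y) :
    componentIndicator T e a x = componentIndicator T e a y := by
  by_cases hx : (T.deleteEdges {e}).Reachable a x
  · rw [componentIndicator_of_reachable hx,
      componentIndicator_of_reachable (hx.trans hxy.reachable)]
  · rw [componentIndicator_of_not_reachable hx,
      componentIndicator_of_not_reachable fun hy => hx (hy.trans hxy.symm.reachable)]

theorem SimpleGraph.Walk.reachable_deleteEdges_of_mem_darts {u v : V} {p : T.Walk u v}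
    (hp : p.IsTrail) {d : T.Dart} (hd : d ∈ p.darts) :
    (T.deleteEdges {d.edge}).Reachable u d.fst ∧ (T.deleteEdges {d.edge}).Reachable d.snd v := by
  induction p with
  | nil => simp at hd
  | @cons u x v h q ih =>
    obtain ⟨hq, hnotmem⟩ := (Walk.isTrail_cons h q).mp hp
    rcases List.mem_cons.mp hd with rfl | hd
    · refine ⟨Reachable.refl _, ⟨q.toDeleteEdges _ fun e he => ?_⟩⟩
      rintro rfl
      exact hnotmem he
    · obtain ⟨hux, hxv⟩ := ih hq hd
      have hne : s(u, x) ≠ d.edge := fun h' => hnotmem (h' ▸ List.mem_map_of_mem hd)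
      have hadj : (T.deleteEdges {d.edge}).Adj u x := deleteEdges_adj.mpr ⟨h, hne⟩
      exact ⟨hadj.reachable.trans hux, hxv⟩

noncomputable def treePotential (w : Sym2 V → ℝ) {u v : V} (p : T.Walk u v) : V → ℝ :=
  (p.darts.map fun d => (1 / w d.edge) • componentIndicator T d.edge d.fst).sum

theorem treePotential_sub (hT : T.IsAcyclic) (w : Sym2 V → ℝ) {u v : V} {p : T.Walk u v}
    (hp : p.IsPath) :
    treePotential w p u - treePotential w p v = (p.edges.map fun e => 1 / w e).sum := by
  have hreach := fun d (hd : d ∈ p.darts) => Walk.reachable_deleteEdges_of_mem_darts hp.isTrail hd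
  have hφ : ∀ x, treePotential w p x =
      (p.darts.map fun d => 1 / w d.edge * componentIndicator T d.edge d.fst x).sum := fun x => by
    simp only [treePotential, Pi.list_sum_apply, List.map_map, Function.comp_def, Pi.smul_apply,
      smul_eq_mul]
  have hu : treePotential w p u = (p.edges.map fun e => 1 / w e).sum := by
    rw [hφ, Walk.edges, List.map_map]
    refine congrArg List.sum (List.map_congr_left fun d hd => ?_)
    rw [componentIndicator_of_reachable (hreach d hd).1.symm, mul_one, Function.comp_apply]
  have hv : treePotential w p v = 0 := by
    refine (hφ v).trans (List.sum_eq_zero fun r hr => ?_)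
    obtain ⟨d, hd, rfl⟩ := List.mem_map.mp hr
    rw [componentIndicator_of_not_reachable, mul_zero]
    exact fun h => isAcyclic_iff_forall_adj_isBridge.mp hT d.adj (h.trans (hreach d hd).2.symm)
  rw [hu, hv, sub_zero]

variable [Fintype V] [DecidableEq V] [DecidableRel T.Adj]

theorem lapW_mulVec_componentIndicator (hT : T.IsAcyclic) (w : Sym2 V → ℝ) {a b : V}
    (hab : T.Adj a b) :
    lapW T w *ᵥ componentIndicator T s(a, b) a = w s(a, b) • edgeVec a b := by
  rw [lapW_mulVec, Finset.sum_eq_single s(a, b)]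
  · rw [edgeLap_mulVec, componentIndicator_of_reachable (Reachable.refl a),
      componentIndicator_of_not_reachable (isAcyclic_iff_forall_adj_isBridge.mp hT hab),
      sub_zero, one_smul]
  · intro f hf hne
    induction f using Sym2.ind with
    | _ c d =>
      have hcd : (T.deleteEdges {s(a, b)}).Adj c d :=
        deleteEdges_adj.mpr ⟨mem_edgeFinset.mp hf, hne⟩
      rw [edgeLap_mulVec, componentIndicator_eq_of_adj hcd, sub_self, zero_smul, smul_zero]
  · exact fun h => absurd (mem_edgeFinset.mpr hab) h

theorem lapW_mulVec_treePotential (hT : T.IsAcyclic) {w : Sym2 V → ℝ}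
    (hw : ∀ e ∈ T.edgeSet, w e ≠ 0) {u v : V} (p : T.Walk u v) :
    lapW T w *ᵥ treePotential w p = edgeVec u v := by
  induction p with
  | nil => simp [treePotential, edgeVec]
  | @cons u x v h q ih =>
    have hcons : treePotential w (Walk.cons h q)
        = (1 / w s(u, x)) • componentIndicator T s(u, x) u + treePotential w q := by
      simp [treePotential, Dart.edge]
    rw [hcons, mulVec_add, mulVec_smul, lapW_mulVec_componentIndicator hT w h, ih, smul_smul,
      one_div_mul_cancel (hw _ h), one_smul, edgeVec_add_edgeVec]

theorem edgeVec_dotProduct_mulVec_eq_treePathWeight (hT : T.IsTree) {w : Sym2 V → ℝ}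
    (hw : ∀ e ∈ T.edgeSet, w e ≠ 0) {M : Matrix V V ℝ} (hM : lapW T w * M * lapW T w = lapW T w)
    (u v : V) : edgeVec u v ⬝ᵥ (M *ᵥ edgeVec u v) = treePathWeight T hT w u v := by
  obtain ⟨hp, -⟩ := (hT.existsUnique_path u v).choose_spec
  rw [treePathWeight, ← treePotential_sub hT.isAcyclic w hp, ← dotProduct_edgeVec,
    ← lapW_mulVec_treePotential hT.isAcyclic hw,
    dotProduct_mulVec_mulVec_of_mul_mul_eq (lapW_transpose T w) hM]

end TreePotential

theorem trace_lapW_mul_eq_stretch {V : Type*} [Fintype V] [DecidableEq V]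
    (G T : SimpleGraph V) [DecidableRel G.Adj] [DecidableRel T.Adj] (hT : T.IsTree)
    {w : Sym2 V → ℝ} (hw : ∀ e ∈ T.edgeSet, w e ≠ 0) {M : Matrix V V ℝ}
    (hM : lapW T w * M * lapW T w = lapW T w) :
    (lapW G w * M).trace = stretch G T hT w := by
  rw [lapW, stretch, Finset.sum_mul, trace_sum]
  refine Finset.sum_congr rfl fun e _ => ?_
  induction e using Sym2.ind with
  | _ u v =>
    rw [smul_mul, trace_smul, trace_edgeLap_mul,
      edgeVec_dotProduct_mulVec_eq_treePathWeight hT hw hM, stretchEdge, Sym2.lift_mk, smul_eq_mul]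

open Polynomial in
theorem count_eigenvalues_gt_le_stretch_div_general {V : Type*} [Fintype V] [DecidableEq V]
    (G T : SimpleGraph V) [DecidableRel G.Adj] [DecidableRel T.Adj]
    (hT : T.IsTree) (hTG : T ≤ G)
    (w : Sym2 V → ℝ) (hw : ∀ e ∈ G.edgeSet, 0 < w e)
    (M : Matrix V V ℝ)
    (hM1 : lapW T w * M * lapW T w = lapW T w)
    (hM2 : M * lapW T w * M = M)
    (hM3 : (lapW T w * M)ᵀ = lapW T w * M)
    (hM4 : (M * lapW T w)ᵀ = M * lapW T w)
    (t : ℝ) (ht : 0 < t) :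
    ((((lapW G w * M).charpoly.map (algebraMap ℝ ℂ)).roots.filter
        fun μ => t < μ.re).card : ℝ) ≤ stretch G T hT w / t := by
  have hwT : ∀ e ∈ T.edgeSet, 0 < w e := fun e he => hw e (edgeSet_mono hTG he)
  have hLT : (lapW T w).PosSemidef := lapW_posSemidef T w fun e he => (hwT e he).le
  have hMsymm : Mᵀ = M :=
    transpose_eq_self_of_isMoorePenroseInverse (lapW_transpose T w) hM1 hM2 hM3 hM4
  have hM : M.PosSemidef := by
    simpa only [conjTranspose_eq_transpose_of_trivial, hMsymm, hM2] using
      hLT.mul_mul_conjTranspose_same M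
  have hre : ∀ μ ∈ ((lapW G w * M).charpoly.map (algebraMap ℝ ℂ)).roots, 0 ≤ μ.re :=
    fun μ => re_nonneg_of_mem_roots_charpoly_map_mul
      (lapW_posSemidef G w fun e he => (hw e he).le) hM
  rw [le_div_iff₀ ht, ← trace_lapW_mul_eq_stretch G T hT (fun e he => (hwT e he).ne') hM1,
    ← sum_re_roots_charpoly_map]
  exact Multiset.card_filter_lt_mul_le_sum_map _ Complex.re hre t

open Polynomial in
/-- If `G` is a connected weighted graph with positive edge weights, `T` a spanning tree of
`G`, and `M` the Moore–Penrose pseudoinverse of `L_T`, then for every `t > 0` the number of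
eigenvalues of `L_G · M` (roots of its characteristic polynomial over `ℂ`, with
multiplicity) whose real part exceeds `t` is at most `st_T(G) / t`. -/
theorem count_eigenvalues_gt_le_stretch_div {V : Type*} [Fintype V] [DecidableEq V]
    (G T : SimpleGraph V) [DecidableRel G.Adj] [DecidableRel T.Adj]
    (hG : G.Connected) (hT : T.IsTree) (hTG : T ≤ G)
    (w : Sym2 V → ℝ) (hw : ∀ e ∈ G.edgeSet, 0 < w e)
    (M : Matrix V V ℝ)
    (hM1 : lapW T w * M * lapW T w = lapW T w)
    (hM2 : M * lapW T w * M = M)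
    (hM3 : (lapW T w * M)ᵀ = lapW T w * M)
    (hM4 : (M * lapW T w)ᵀ = M * lapW T w)
    (t : ℝ) (ht : 0 < t) :
    ((((lapW G w * M).charpoly.map (algebraMap ℝ ℂ)).roots.filter
        fun μ => t < μ.re).card : ℝ) ≤ stretch G T hT w / t :=
  count_eigenvalues_gt_le_stretch_div_general G T hT hTG w hw M hM1 hM2 hM3 hM4 t ht
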